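/- Let m ≥ 3 and let d_1, …, d_m be positive integers satisfying Σ_{j even} d_j = Σ_{j odd} d_j and, for every odd i with 2 ≤ i ≤ m−2, both Σ_{j even, 1≤j≤i} d_j ≤ Σ_{j odd, 1≤j≤i} d_j and Σ_{j even, i≤j≤m} d_j ≤ Σ_{j odd, i≤j≤m} d_j, together with d_m ≤ d_{m-1} if m is even. Then there exists an exact sequence of ℤ/p-vector spaces 0 → (ℤ/p)^{d_1} → (ℤ/p)^{d_2} → ⋯ → (ℤ/p)^{d_m} → 0 for any prime p. -/

import Mathlib

open Finset

/-- The "shift" linear map `k^a → k^b` that takes the last `r` coordinates of the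
input and puts them as the first `r` coordinates of the output, zero elsewhere. -/
def shiftMap (k : Type*) [Semiring k] (a b r : ℕ) :
    (Fin a → k) →ₗ[k] (Fin b → k) where
  toFun x := fun j =>
    if h : (j : ℕ) < r ∧ a - r + (j : ℕ) < a then x ⟨a - r + (j : ℕ), h.2⟩ else 0
  map_add' x y := by
    funext j
    by_cases h : (j : ℕ) < r ∧ a - r + (j : ℕ) < a <;> simp [h]
  map_smul' c x := by
    funext j
    by_cases h : (j : ℕ) < r ∧ a - r + (j : ℕ) < a <;> simp [h]

lemma shiftMap_eq_zero_iff {k : Type*} [Semiring k] {a b r : ℕ}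
    (ha : r ≤ a) (hb : r ≤ b) (x : Fin a → k) :
    shiftMap k a b r x = 0 ↔ ∀ j : Fin a, a - r ≤ (j : ℕ) → x j = 0 := by
  constructor
  · intro hx j hj
    have hjr : (j : ℕ) - (a - r) < r := by omega
    have hlt : (j : ℕ) - (a - r) < b := lt_of_lt_of_le hjr hb
    have := congrFun hx ⟨(j : ℕ) - (a - r), hlt⟩
    simp only [shiftMap, LinearMap.coe_mk, AddHom.coe_mk, Pi.zero_apply] at this
    have hcond : ((⟨(j : ℕ) - (a - r), hlt⟩ : Fin b) : ℕ) < r ∧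
        a - r + ((⟨(j : ℕ) - (a - r), hlt⟩ : Fin b) : ℕ) < a := by
      simp only []
      omega
    rw [dif_pos hcond] at this
    convert this using 2
    ext
    simp
    omega
  · intro hx
    funext j
    simp only [shiftMap, LinearMap.coe_mk, AddHom.coe_mk, Pi.zero_apply]
    split
    · next h => exact hx _ (Nat.le_add_right _ _)
    · rfl

lemma mem_range_shiftMap_iff {k : Type*} [Semiring k] {a b r : ℕ}
    (ha : r ≤ a) (hb : r ≤ b) (y : Fin b → k) :
    y ∈ LinearMap.range (shiftMap k a b r) ↔ ∀ j : Fin b, r ≤ (j : ℕ) → y j = 0 := by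
  constructor
  · rintro ⟨x, rfl⟩ j hj
    simp only [shiftMap, LinearMap.coe_mk, AddHom.coe_mk]
    rw [dif_neg]
    omega
  · intro hy
    refine ⟨fun i => if h : (i : ℕ) - (a - r) < b ∧ a - r ≤ (i : ℕ) then
      y ⟨(i : ℕ) - (a - r), h.1⟩ else 0, ?_⟩
    funext j
    simp only [shiftMap, LinearMap.coe_mk, AddHom.coe_mk]
    by_cases h : (j : ℕ) < r ∧ a - r + (j : ℕ) < a
    · rw [dif_pos h]
      have h2 : (((⟨a - r + (j : ℕ), h.2⟩ : Fin a) : ℕ) - (a - r) < b ∧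
          a - r ≤ ((⟨a - r + (j : ℕ), h.2⟩ : Fin a) : ℕ)) := by
        simp only []
        omega
      rw [dif_pos h2]
      congr 1
      ext
      simp
    · rw [dif_neg h]
      have : r ≤ (j : ℕ) := by omega
      exact (hy j this).symm

lemma alt_sum_eq (d : ℕ → ℕ) (s : Finset ℕ) :
    ∑ j ∈ s, (-1 : ℤ) ^ j * (d j : ℤ) =
      (∑ j ∈ s.filter (fun j => Even j), d j : ℤ) -
        (∑ j ∈ s.filter (fun j => ¬ Even j), d j : ℤ) := by
  rw [← Finset.sum_filter_add_sum_filter_not s (fun j => Even j)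
    (fun j => (-1 : ℤ) ^ j * (d j : ℤ))]
  push_cast
  rw [sub_eq_add_neg, ← Finset.sum_neg_distrib]
  congr 1
  · exact Finset.sum_congr rfl fun j hj => by
      rw [(Finset.mem_filter.mp hj).2.neg_one_pow, one_mul]
  · exact Finset.sum_congr rfl fun j hj => by
      rw [(Nat.not_even_iff_odd.mp (Finset.mem_filter.mp hj).2).neg_one_pow]; ring

/-- The `n = 1` case of the generalized Horn problem: if positive integers
`d 1, …, d m` (`m ≥ 3`) satisfy the Horn type (in)equalities, then for any prime
`p` there is an exact sequence of `ℤ/p`-vector spaces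
`0 → (ℤ/p)^{d 1} → ⋯ → (ℤ/p)^{d m} → 0`. -/
theorem exact_sequence_zmod_of_horn_inequalities (p : ℕ) (hp : p.Prime)
    (m : ℕ) (hm : 3 ≤ m) (d : ℕ → ℕ) (hd : ∀ i, 1 ≤ i → i ≤ m → 0 < d i)
    (hsum : ∑ j ∈ (Finset.Icc 1 m).filter (fun j => Even j), d j =
      ∑ j ∈ (Finset.Icc 1 m).filter (fun j => ¬ Even j), d j)
    (hleft : ∀ i, Odd i → 2 ≤ i → i ≤ m - 2 →
      ∑ j ∈ (Finset.Icc 1 i).filter (fun j => Even j), d j ≤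
        ∑ j ∈ (Finset.Icc 1 i).filter (fun j => ¬ Even j), d j)
    (hright : ∀ i, Odd i → 2 ≤ i → i ≤ m - 2 →
      ∑ j ∈ (Finset.Icc i m).filter (fun j => Even j), d j ≤
        ∑ j ∈ (Finset.Icc i m).filter (fun j => ¬ Even j), d j)
    (hlast : Even m → d m ≤ d (m - 1)) :
    ∃ f : (i : ℕ) → ((Fin (d i) → ZMod p) →ₗ[ZMod p] (Fin (d (i + 1)) → ZMod p)),
      Function.Injective (f 1) ∧ Function.Surjective (f (m - 1)) ∧
      ∀ i, 1 ≤ i → i ≤ m - 2 → LinearMap.range (f i) = LinearMap.ker (f (i + 1)) := by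
  -- alternating partial sums
  set A : ℕ → ℤ := fun i => ∑ j ∈ Finset.Icc 1 i, (-1 : ℤ) ^ j * (d j : ℤ) with hAdef
  set B : ℕ → ℤ := fun i => ∑ j ∈ Finset.Icc i m, (-1 : ℤ) ^ j * (d j : ℤ) with hBdef
  have hA : ∀ i, A i =
      (∑ j ∈ (Finset.Icc 1 i).filter (fun j => Even j), d j : ℤ) -
        (∑ j ∈ (Finset.Icc 1 i).filter (fun j => ¬ Even j), d j : ℤ) :=
    fun i => alt_sum_eq d _
  have hB : ∀ i, B i =
      (∑ j ∈ (Finset.Icc i m).filter (fun j => Even j), d j : ℤ) -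
        (∑ j ∈ (Finset.Icc i m).filter (fun j => ¬ Even j), d j : ℤ) :=
    fun i => alt_sum_eq d _
  have hAm : A m = 0 := by
    rw [hA m, sub_eq_zero]
    exact_mod_cast hsum
  -- splitting
  have hsplit : ∀ i, i ≤ m → A i + B (i + 1) = A m := by
    intro i hi
    have h1 : Finset.Icc 1 i = Finset.Ioc 0 i := by rw [← Finset.Icc_add_one_left_eq_Ioc]; rfl
    have h2 : Finset.Icc (i + 1) m = Finset.Ioc i m := by rw [← Finset.Icc_add_one_left_eq_Ioc]
    have h3 : Finset.Icc 1 m = Finset.Ioc 0 m := by rw [← Finset.Icc_add_one_left_eq_Ioc]; rfl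
    rw [hAdef, hBdef]
    simp only [h1, h2, h3]
    exact Finset.sum_Ioc_consecutive _ (Nat.zero_le i) hi
  -- recursion for A
  have hArec : ∀ i, A (i + 1) = A i + (-1 : ℤ) ^ (i + 1) * (d (i + 1) : ℤ) := by
    intro i
    rw [hAdef]
    exact Finset.sum_Icc_succ_top (by omega) _
  set rZ : ℕ → ℤ := fun i => (-1 : ℤ) ^ i * A i with hrZdef
  have hrZrec : ∀ i, rZ (i + 1) = (d (i + 1) : ℤ) - rZ i := by
    intro i
    have he : (-1 : ℤ) ^ i * (-1 : ℤ) ^ i = 1 := by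
      rw [← pow_add]; exact Even.neg_one_pow ⟨i, rfl⟩
    simp only [hrZdef, hArec i, pow_succ]
    linear_combination (d (i + 1) : ℤ) * he
  have hm1 : m - 1 + 1 = m := by omega
  have hm2 : m - 2 + 1 = m - 1 := by omega
  -- nonnegativity of rZ on [1, m-1]
  have hnn : ∀ i, 1 ≤ i → i ≤ m - 1 → 0 ≤ rZ i := by
    intro i h1 h2
    rcases Nat.even_or_odd i with he | ho
    · -- i even : rZ i = A i = -B (i+1)
      have hrw : rZ i = A i := by rw [hrZdef]; simp [he.neg_one_pow]
      have hAB : A i = -B (i + 1) := by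
        have := hsplit i (by omega)
        rw [hAm] at this
        linarith
      rw [hrw, hAB, neg_nonneg]
      by_cases hc : i + 1 ≤ m - 2
      · have hodd : Odd (i + 1) := Even.add_one he
        have := hright (i + 1) hodd (by omega) hc
        rw [hB]
        have := @Nat.cast_le ℤ _ _ _ |>.mpr this
        linarith
      · have him : i = m - 2 ∨ i = m - 1 := by omega
        rcases him with rfl | rfl
        · -- i = m - 2, so m is even; B (m-1) = d m - d (m-1) ≤ 0
          have hmeven : Even m := by
            rw [Nat.even_iff] at he ⊢; omega
          have hset : Finset.Icc (m - 1) m = {m - 1, m} := by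
            ext x
            simp only [Finset.mem_Icc, Finset.mem_insert, Finset.mem_singleton]
            omega
          have hBval : B (m - 2 + 1) =
              (-1 : ℤ) ^ (m - 1) * d (m - 1) + (-1 : ℤ) ^ m * d m := by
            simp only [hBdef, hm2, hset]
            rw [Finset.sum_pair (by omega)]
          have hod : Odd (m - 1) := by
            rw [Nat.odd_iff]; rw [Nat.even_iff] at hmeven; omega
          rw [hBval, hod.neg_one_pow, hmeven.neg_one_pow]
          have hle : (d m : ℤ) ≤ (d (m - 1) : ℤ) := by exact_mod_cast hlast hmeven
          linarith
        · -- i = m - 1 even, so m odd; B m = -d m ≤ 0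
          have hmo : Odd m := by
            rw [Nat.odd_iff]; rw [Nat.even_iff] at he; omega
          rw [hm1, hBdef]
          simp only [Finset.Icc_self, Finset.sum_singleton, hmo.neg_one_pow]
          have : (0 : ℤ) ≤ d m := by positivity
          linarith
    · -- i odd : rZ i = -A i
      have hrw : rZ i = -A i := by rw [hrZdef]; simp [ho.neg_one_pow]
      rw [hrw, neg_nonneg]
      by_cases hc1 : i = 1
      · subst hc1
        rw [hAdef]
        simp only [Finset.Icc_self, Finset.sum_singleton, pow_one]
        have : (0 : ℤ) ≤ d 1 := by positivity
        linarith
      · by_cases hc : i ≤ m - 2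
        · have := hleft i ho (by omega) hc
          rw [hA]
          have := @Nat.cast_le ℤ _ _ _ |>.mpr this
          linarith
        · -- i = m - 1 odd, so m even; A (m-1) = -d m ≤ 0
          have him : i = m - 1 := by omega
          subst him
          have hmeven : Even m := by
            rw [Nat.even_iff]; rw [Nat.odd_iff] at ho; omega
          have := hArec (m - 1)
          rw [hm1, hAm, hmeven.neg_one_pow] at this
          have h0 : (0 : ℤ) ≤ d m := by positivity
          linarith
  -- key values of rZ
  have hA1 : A 1 = -(d 1 : ℤ) := by
    simp only [hAdef, Finset.Icc_self, Finset.sum_singleton, pow_one]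
    ring
  have hrZ1 : rZ 1 = (d 1 : ℤ) := by
    simp only [hrZdef, pow_one, hA1]
    ring
  have hrZm1 : rZ (m - 1) = (d m : ℤ) := by
    have := hrZrec (m - 1)
    rw [hm1] at this
    have hz : rZ m = 0 := by simp only [hrZdef, hAm]; ring
    rw [hz] at this
    linarith
  -- the natural-number ranks
  set r : ℕ → ℕ := fun i => (rZ i).toNat with hrdef
  have hcast : ∀ i, 1 ≤ i → i ≤ m - 1 → (r i : ℤ) = rZ i := by
    intro i h1 h2
    exact Int.toNat_of_nonneg (hnn i h1 h2)
  have hr1 : r 1 = d 1 := by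
    have := hcast 1 le_rfl (by omega)
    rw [hrZ1] at this
    exact_mod_cast this
  have hrm1 : r (m - 1) = d m := by
    have := hcast (m - 1) (by omega) le_rfl
    rw [hrZm1] at this
    exact_mod_cast this
  have hrec : ∀ i, 1 ≤ i → i ≤ m - 2 → r i + r (i + 1) = d (i + 1) := by
    intro i h1 h2
    have e1 := hcast i h1 (by omega)
    have e2 := hcast (i + 1) (by omega) (by omega)
    have := hrZrec i
    have : (r i : ℤ) + (r (i + 1) : ℤ) = (d (i + 1) : ℤ) := by
      rw [e1, e2]; linarith [hrZrec i]
    exact_mod_cast this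
  have hrle : ∀ i, 1 ≤ i → i ≤ m - 1 → r i ≤ d i := by
    intro i h1 h2
    rcases eq_or_lt_of_le h1 with h | h
    · rw [← h, hr1]
    · have e1 := hcast i h1 h2
      have e0 := hcast (i - 1) (by omega) (by omega)
      have hr := hrZrec (i - 1)
      rw [show i - 1 + 1 = i by omega] at hr
      have hn := hnn (i - 1) (by omega) (by omega)
      have : (r i : ℤ) ≤ (d i : ℤ) := by rw [e1]; linarith
      exact_mod_cast this
  have hrle' : ∀ i, 1 ≤ i → i ≤ m - 1 → r i ≤ d (i + 1) := by
    intro i h1 h2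
    rcases eq_or_lt_of_le h2 with h | h
    · rw [h, hrm1, hm1]
    · have e1 := hcast i h1 h2
      have e2 := hcast (i + 1) (by omega) (by omega)
      have hr := hrZrec i
      have hn := hnn (i + 1) (by omega) (by omega)
      have : (r i : ℤ) ≤ (d (i + 1) : ℤ) := by rw [e1]; linarith
      exact_mod_cast this
  -- the maps
  refine ⟨fun i => shiftMap (ZMod p) (d i) (d (i + 1)) (r i), ?_, ?_, ?_⟩
  · -- injectivity of f 1
    show Function.Injective (shiftMap (ZMod p) (d 1) (d (1 + 1)) (r 1))
    rw [← LinearMap.ker_eq_bot, LinearMap.ker_eq_bot']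
    intro x hx
    rw [shiftMap_eq_zero_iff (by rw [hr1]) (hrle' 1 le_rfl (by omega))] at hx
    funext j
    exact hx j (by rw [hr1]; omega)
  · -- surjectivity of f (m - 1)
    show Function.Surjective (shiftMap (ZMod p) (d (m - 1)) (d (m - 1 + 1)) (r (m - 1)))
    intro y
    have ha : r (m - 1) ≤ d (m - 1) := hrle (m - 1) (by omega) le_rfl
    have hb : r (m - 1) ≤ d (m - 1 + 1) := by rw [hm1, hrm1]
    refine LinearMap.mem_range.mp ((mem_range_shiftMap_iff ha hb y).mpr ?_)
    intro j hj
    exfalso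
    have hjl : (j : ℕ) < d (m - 1 + 1) := j.isLt
    have heq : r (m - 1) = d (m - 1 + 1) := by rw [hm1]; exact hrm1
    omega
  · -- exactness
    intro i h1 h2
    ext y
    show y ∈ LinearMap.range (shiftMap (ZMod p) (d i) (d (i + 1)) (r i)) ↔
      y ∈ LinearMap.ker (shiftMap (ZMod p) (d (i + 1)) (d (i + 1 + 1)) (r (i + 1)))
    rw [LinearMap.mem_ker]
    rw [mem_range_shiftMap_iff (hrle i h1 (by omega)) (hrle' i h1 (by omega))]
    rw [shiftMap_eq_zero_iff (hrle (i + 1) (by omega) (by omega))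
      (hrle' (i + 1) (by omega) (by omega))]
    have hkey : d (i + 1) - r (i + 1) = r i := by
      have := hrec i h1 h2
      omega
    rw [hkey]
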